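/- A λ-small colimit of λ-presentable objects in a cocomplete category is λ-presentable. -/

import Mathlib

/-!
`Hom(colim F, -)` is the `K`-indexed limit of the functors `Hom(F k, -)`, and in `Type`
limits indexed by categories with fewer than `κ` arrows commute with `κ`-filtered colimits
(Mathlib's `isCardinalPresentable_of_isColimit'`). For regular `κ`, `IsCardinalFiltered` and
`IsPresentable` agree with Mathlib's `CategoryTheory.IsCardinalFiltered` and
`IsCardinalPresentable`, because `Arrow K ≃ Σ a b, a ⟶ b`.
-/

universe v u

open CategoryTheory Limits Opposite

/-- A small category `J` is `κ`-filtered if every diagram of size `< κ` admits a cocone. -/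
def IsCardinalFiltered (J : Type v) [SmallCategory J] (κ : Cardinal.{v}) : Prop :=
  ∀ (K : Type v) (_ : SmallCategory K),
    Cardinal.mk (Σ (a : K) (b : K), a ⟶ b) < κ →
      ∀ F : K ⥤ J, Nonempty (Limits.Cocone F)

/-- An object `X` is `κ`-presentable if `Hom(X, -)` preserves `κ`-filtered colimits. -/
def IsPresentable {D : Type u} [Category.{v} D] (κ : Cardinal.{v}) (X : D) : Prop :=
  ∀ (J : Type v) (_ : SmallCategory J), IsCardinalFiltered J κ →
    Nonempty (PreservesColimitsOfShape J (coyoneda.obj (op X)))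

lemma hasCardinalLT_arrow_iff (K : Type v) [SmallCategory K] (κ : Cardinal.{v}) :
    HasCardinalLT (Arrow K) κ ↔ Cardinal.mk (Σ (a : K) (b : K), a ⟶ b) < κ := by
  rw [hasCardinalLT_iff_of_equiv (Arrow.equivSigma K), hasCardinalLT_iff_cardinal_mk_lt]

lemma isCardinalFiltered_iff_categoryTheory (J : Type v) [SmallCategory J] (κ : Cardinal.{v})
    [Fact κ.IsRegular] :
    _root_.IsCardinalFiltered J κ ↔ CategoryTheory.IsCardinalFiltered J κ :=
  ⟨fun hJ ↦ ⟨fun F hA ↦ hJ _ _ ((hasCardinalLT_arrow_iff _ κ).1 hA) F⟩,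
    fun _ K _ hK F ↦ ⟨IsCardinalFiltered.cocone F ((hasCardinalLT_arrow_iff K κ).2 hK)⟩⟩

lemma isPresentable_iff_isCardinalPresentable {D : Type u} [Category.{v} D]
    (κ : Cardinal.{v}) [Fact κ.IsRegular] (X : D) :
    IsPresentable κ X ↔ IsCardinalPresentable X κ :=
  ⟨fun hX ↦ ⟨fun J _ hJ ↦ (hX J _ ((isCardinalFiltered_iff_categoryTheory J κ).2 hJ)).some⟩,
    fun _ J _ hJ ↦
      have := (isCardinalFiltered_iff_categoryTheory J κ).1 hJ
      ⟨Functor.preservesColimitsOfShape_of_isCardinalAccessible _ κ J⟩⟩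

theorem statement2 {D : Type u} [Category.{v} D] [HasColimits D]
    (κ : Cardinal.{v}) (hκ : κ.IsRegular)
    (K : Type v) [SmallCategory K]
    (hK : Cardinal.mk (Σ (a : K) (b : K), a ⟶ b) < κ)
    (F : K ⥤ D) (hF : ∀ k : K, IsPresentable κ (F.obj k)) :
    IsPresentable κ (colimit F) := by
  have : Fact κ.IsRegular := ⟨hκ⟩
  have (k : K) : IsCardinalPresentable (F.obj k) κ :=
    (isPresentable_iff_isCardinalPresentable κ _).1 (hF k)
  exact (isPresentable_iff_isCardinalPresentable κ _).2 <|
    isCardinalPresentable_of_isColimit' _ (colimit.isColimit F) κ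
      ((hasCardinalLT_arrow_iff K κ).2 hK)
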